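/- arXiv:2005.03516 — 3 statements merged into one kernel-verified Lean document; each statement's English description precedes it below -/
import Mathlib

section
/- For any positive integer p and any p-core partition λ̄ with characteristic vector (c_0, c_1, ..., c_{p-1}) (a p-tuple of integers summing to 0), the size of λ̄ equals (p/2)·∑_{j=0}^{p-1} c_j² + ∑_{j=1}^{p-1} j·c_j. -/
/-!
Truncate both Maya diagrams at `-N`, with `N = p * M` large. For a partition with at most `N`
rows the truncated diagram is `{λ_i - i : 1 ≤ i ≤ N}`, whose elements sum to
`|λ| - N (N + 1) / 2`. The truncated core diagram is the disjoint union over the residues `i`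
of the progressions `p m + i`, `-M ≤ m < c_i`, whose sums are Gauss sums. Equating the two
totals, every term involving `M` cancels once `∑ c_i = 0`.
-/

/-- The charge-zero Maya diagram of a Young diagram. -/
def mayaHat (μ : YoungDiagram) : Set ℤ :=
  {x | ∃ i : ℕ, x = (μ.rowLen i : ℤ) - (i + 1)}

/-- The charge-zero Maya diagram of the `p`-core associated to a characteristic
vector `c`, obtained by recombining the shifted empty Maya diagrams `M_∅ + c i`. -/
def coreMaya (p : ℕ) (c : Fin p → ℤ) : Set ℤ :=
  {x | ∃ i : Fin p, ∃ m : ℤ, m < c i ∧ x = (p : ℤ) * m + (i : ℤ)}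

/-- Adjacency of boxes (sharing an edge). -/
def Adj (a b : ℕ × ℕ) : Prop :=
  (a.1 = b.1 ∧ (a.2 + 1 = b.2 ∨ b.2 + 1 = a.2)) ∨
  (a.2 = b.2 ∧ (a.1 + 1 = b.1 ∨ b.1 + 1 = a.1))

/-- `lam/mu` is a border strip of size `p`: a connected skew diagram with `p`
boxes containing no `2 × 2` square. -/
def IsBorderStrip (p : ℕ) (lam mu : YoungDiagram) : Prop :=
  mu ≤ lam ∧ (lam.cells \ mu.cells).card = p ∧
  (∀ a ∈ lam.cells \ mu.cells, ∀ b ∈ lam.cells \ mu.cells,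
    Relation.ReflTransGen
      (fun x y => x ∈ lam.cells \ mu.cells ∧ y ∈ lam.cells \ mu.cells ∧ Adj x y) a b) ∧
  ¬ ∃ i j : ℕ, (i, j) ∈ lam.cells \ mu.cells ∧ (i + 1, j) ∈ lam.cells \ mu.cells ∧
      (i, j + 1) ∈ lam.cells \ mu.cells ∧ (i + 1, j + 1) ∈ lam.cells \ mu.cells

/-- A partition is a `p`-core if no border strip of size `p` can be removed from it. -/
def IsPCore (p : ℕ) (lam : YoungDiagram) : Prop :=
  ¬ ∃ mu : YoungDiagram, IsBorderStrip p lam mu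

open Finset

theorem Finset.sum_range_intCast_id_mul_two (n : ℕ) :
    (∑ i ∈ range n, (i : ℤ)) * 2 = n * (n - 1) := by
  induction n with
  | zero => simp
  | succ n ih => rw [sum_range_succ, add_mul, ih]; push_cast; ring

theorem Int.sum_Ico_id_mul_two {a b : ℤ} (h : a ≤ b) :
    (∑ m ∈ Ico a b, m) * 2 = (b - a) * (a + b - 1) := by
  induction b, h using Int.leInduction with
  | base => simp
  | succ b hab ih =>
    rw [← insert_Ico_right_eq_Ico_add_one hab, sum_insert (by simp), add_mul, ih]
    ring

theorem Fin.eq_and_eq_of_mul_add_eq {p : ℕ} {i j : Fin p} {m n : ℤ}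
    (h : p * m + i = p * n + j) : i = j ∧ m = n := by
  have hi := i.isLt
  have hj := j.isLt
  have hmn : m = n := by
    rcases lt_trichotomy m n with hlt | heq | hgt
    · nlinarith
    · exact heq
    · nlinarith
  subst hmn
  exact ⟨Fin.ext (by omega), rfl⟩

namespace YoungDiagram

theorem rowLen_eq_zero_of_colLen_le {μ : YoungDiagram} {i : ℕ} (h : μ.colLen 0 ≤ i) :
    μ.rowLen i = 0 := by
  by_contra hi
  have := mem_iff_lt_colLen.mp (mem_iff_lt_rowLen.mpr (Nat.pos_of_ne_zero hi))
  omega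

theorem card_eq_sum_rowLen {μ : YoungDiagram} {N : ℕ} (hN : μ.colLen 0 ≤ N) :
    μ.card = ∑ i ∈ range N, μ.rowLen i := by
  have hcells : μ.cells = (range N).biUnion μ.row := by
    ext ⟨i, j⟩
    simp only [mem_biUnion, mem_range, mem_row_iff, mem_cells]
    refine ⟨fun h => ⟨i, ?_, h, rfl⟩, fun ⟨_, _, h, hi⟩ => hi ▸ h⟩
    have := mem_iff_lt_colLen.mp (μ.up_left_mem le_rfl (Nat.zero_le j) h)
    omega
  have hdisj : Set.PairwiseDisjoint ↑(range N) μ.row := fun i _ j _ hij =>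
    disjoint_left.mpr fun x hx hx' => hij ((mem_row_iff.mp hx).2 ▸ (mem_row_iff.mp hx').2)
  rw [YoungDiagram.card, hcells, card_biUnion hdisj]
  exact sum_congr rfl fun i _ => μ.rowLen_eq_card.symm

end YoungDiagram

def mayaHatTrunc (μ : YoungDiagram) (N : ℕ) : Finset ℤ :=
  (range N).image fun i => (μ.rowLen i : ℤ) - (i + 1)

theorem coe_mayaHatTrunc {μ : YoungDiagram} {N : ℕ} (hN : μ.colLen 0 ≤ N) :
    (mayaHatTrunc μ N : Set ℤ) = mayaHat μ ∩ Set.Ici (-N) := by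
  ext x
  simp only [mayaHatTrunc, coe_image, coe_range, Set.mem_image, Set.mem_Iio, mayaHat,
    Set.mem_inter_iff, Set.mem_ofPred_eq, Set.mem_Ici]
  constructor
  · rintro ⟨i, hi, rfl⟩
    exact ⟨⟨i, rfl⟩, by omega⟩
  · rintro ⟨⟨i, rfl⟩, hx⟩
    refine ⟨i, ?_, rfl⟩
    by_contra! hNi
    rw [YoungDiagram.rowLen_eq_zero_of_colLen_le (hN.trans hNi)] at hx
    omega

theorem sum_mayaHatTrunc_mul_two {μ : YoungDiagram} {N : ℕ} (hN : μ.colLen 0 ≤ N) :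
    (∑ x ∈ mayaHatTrunc μ N, x) * 2 = 2 * μ.card - N * (N + 1) := by
  have hanti : StrictAnti fun i : ℕ => (μ.rowLen i : ℤ) - (i + 1) := fun i j hij => by
    have := μ.rowLen_anti i j hij.le
    dsimp only
    omega
  rw [mayaHatTrunc, sum_image hanti.injective.injOn, sum_sub_distrib, sum_add_distrib, sum_const,
    card_range, YoungDiagram.card_eq_sum_rowLen hN]
  push_cast
  linear_combination -sum_range_intCast_id_mul_two N

noncomputable def coreMayaTrunc (p : ℕ) (c : Fin p → ℤ) (M : ℕ) : Finset ℤ :=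
  univ.biUnion fun i : Fin p => (Ico (-(M : ℤ)) (c i)).image fun m => p * m + i

theorem coe_coreMayaTrunc (p : ℕ) (c : Fin p → ℤ) (M : ℕ) :
    (coreMayaTrunc p c M : Set ℤ) = coreMaya p c ∩ Set.Ici (-(p * M : ℕ)) := by
  ext x
  simp only [coreMayaTrunc, coe_biUnion, coe_univ, Set.mem_univ, Set.iUnion_true, coe_image,
    coe_Ico, Set.mem_iUnion, Set.mem_image, Set.mem_Ico, coreMaya, Set.mem_inter_iff,
    Set.mem_ofPred_eq, Set.mem_Ici]
  have hi := fun i : Fin p => i.isLt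
  constructor
  · rintro ⟨i, m, ⟨hMm, hmc⟩, rfl⟩
    refine ⟨⟨i, m, hmc, rfl⟩, ?_⟩
    push_cast
    nlinarith [hi i]
  · rintro ⟨⟨i, m, hmc, rfl⟩, hx⟩
    refine ⟨i, m, ⟨?_, hmc⟩, rfl⟩
    push_cast at hx
    by_contra! hm
    nlinarith [hi i]

theorem sum_coreMayaTrunc_mul_two {p : ℕ} {c : Fin p → ℤ} (hc : ∑ i, c i = 0) {M : ℕ}
    (hM : ∀ i, -(M : ℤ) ≤ c i) :
    (∑ x ∈ coreMayaTrunc p c M, x) * 2 =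
      p * ∑ i, c i ^ 2 + 2 * ∑ i : Fin p, (i : ℤ) * c i - (p * M) * (p * M + 1) := by
  have hdisj : Set.PairwiseDisjoint ↑(univ : Finset (Fin p))
      fun i => (Ico (-(M : ℤ)) (c i)).image fun m => (p : ℤ) * m + i := by
    intro i _ j _ hij
    simp only [Function.onFun, disjoint_left, mem_image]
    rintro _ ⟨m, -, rfl⟩ ⟨n, -, h⟩
    exact hij (Fin.eq_and_eq_of_mul_add_eq h.symm).1
  have hblock (i : Fin p) :
      (∑ x ∈ (Ico (-(M : ℤ)) (c i)).image fun m => (p : ℤ) * m + i, x) * 2 =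
        p * c i ^ 2 + 2 * (i * c i) - p * c i + 2 * M * i - p * (M ^ 2 + M) := by
    have hinj : Set.InjOn (fun m : ℤ => (p : ℤ) * m + i) ↑(Ico (-(M : ℤ)) (c i)) :=
      fun m _ n _ h => (Fin.eq_and_eq_of_mul_add_eq h).2
    rw [sum_image hinj, sum_add_distrib, ← mul_sum, sum_const, Int.card_Ico, nsmul_eq_mul,
      Int.toNat_of_nonneg (by linarith [hM i]), add_mul, mul_assoc,
      Int.sum_Ico_id_mul_two (hM i)]
    ring
  rw [coreMayaTrunc, sum_biUnion hdisj, sum_mul, sum_congr rfl fun i _ => hblock i]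
  simp only [sum_add_distrib, sum_sub_distrib, ← mul_sum, sum_const, card_univ,
    Fintype.card_fin, nsmul_eq_mul, hc]
  have hgauss := sum_range_intCast_id_mul_two p
  rw [← Fin.sum_univ_eq_sum_range (fun i => (i : ℤ))] at hgauss
  linear_combination (M : ℤ) * hgauss

theorem size_core_eq_characteristic_vector_general (p : ℕ) (hp : 0 < p)
    (c : Fin p → ℤ) (hc : ∑ i, c i = 0) (lbar : YoungDiagram)
    (hm : mayaHat lbar = coreMaya p c) :
    (lbar.card : ℚ) =
      (p : ℚ) / 2 * ∑ j : Fin p, (c j : ℚ) ^ 2 + ∑ j : Fin p, (j : ℚ) * (c j : ℚ) := by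
  obtain ⟨M, hrows, hM⟩ : ∃ M : ℕ, lbar.colLen 0 ≤ p * M ∧ ∀ i, -(M : ℤ) ≤ c i := by
    refine ⟨lbar.colLen 0 + ∑ i, (c i).natAbs,
      (Nat.le_add_right _ _).trans (Nat.le_mul_of_pos_left _ hp), fun i => ?_⟩
    have := single_le_sum (fun j _ => Nat.zero_le (c j).natAbs) (mem_univ i)
    omega
  have htrunc : mayaHatTrunc lbar (p * M) = coreMayaTrunc p c M := by
    rw [← coe_inj, coe_mayaHatTrunc hrows, coe_coreMayaTrunc, hm]
  have hsum := sum_mayaHatTrunc_mul_two hrows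
  rw [htrunc, sum_coreMayaTrunc_mul_two hc hM] at hsum
  have key : 2 * (lbar.card : ℤ) = p * ∑ j, c j ^ 2 + 2 * ∑ j : Fin p, (j : ℤ) * c j := by
    push_cast at hsum
    linarith
  have keyQ : 2 * (lbar.card : ℚ) = p * ∑ j, (c j : ℚ) ^ 2 + 2 * ∑ j : Fin p, (j : ℚ) * c j := by
    exact_mod_cast key
  linear_combination keyQ / 2

/-- The size of a `p`-core in terms of its characteristic vector. -/
theorem size_core_eq_characteristic_vector (p : ℕ) (hp : 0 < p)
    (c : Fin p → ℤ) (hc : ∑ i, c i = 0) (lbar : YoungDiagram)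
    (hcore : IsPCore p lbar) (hm : mayaHat lbar = coreMaya p c) :
    (lbar.card : ℚ) =
      (p : ℚ) / 2 * ∑ j : Fin p, (c j : ℚ) ^ 2 + ∑ j : Fin p, (j : ℚ) * (c j : ℚ) :=
  size_core_eq_characteristic_vector_general p hp c hc lbar hm
end

section
/- For any partition λ, the product of all hook lengths of λ equals the product over all pairs (m, n) with m ∈ M_λ, n ∉ M_λ, and m > n, of the differences (m − n), where M_λ is the Maya diagram of λ. -/
open scoped BigOperators

/-- The hook length of a box of a Young diagram. -/
def hook (μ : YoungDiagram) (c : ℕ × ℕ) : ℕ :=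
  (μ.rowLen c.1 - c.2) + (μ.colLen c.2 - c.1) - 1

/-- The Maya diagram `M_λ = {n < 0} ∪ {λ_i + r - i}` of a partition. -/
def maya (μ : YoungDiagram) : Set ℤ :=
  {x | ∃ i : ℕ, x = (μ.rowLen i : ℤ) - (i + 1) + (μ.colLen 0 : ℤ)}

/-!
Reading the boundary of `λ` from the bottom left, row `i` and column `j` sit at the positions
`β i = λ_i + r - 1 - i` and `γ j = j + r - λ'_j`. The identity
`β i - γ j = (λ_i - j) + (λ'_j - i) - 1`, valid for every `(i, j)`, shows at once that
`γ j < β i` exactly when `(i, j)` is a cell, and that the difference is then its hook length.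
Every integer is either some `β i` or some `γ j`, so `M_λ = range β` has complement `range γ`,
and `(i, j) ↦ (β i, γ j)` is a bijection from the cells onto the pairs of the product.
-/

namespace YoungDiagram

variable (μ : YoungDiagram)

noncomputable def beta (i : ℕ) : ℤ := (μ.rowLen i : ℤ) + μ.colLen 0 - (i + 1)

noncomputable def cobeta (j : ℕ) : ℤ := (j : ℤ) + μ.colLen 0 - μ.colLen j

theorem maya_eq_range_beta : maya μ = Set.range μ.beta := by
  ext x
  simp only [maya, beta, Set.mem_ofPred_eq, Set.mem_range, eq_comm (a := x)]
  exact exists_congr fun i => by ring_nf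

theorem beta_strictAnti : StrictAnti μ.beta :=
  strictAnti_nat_of_succ_lt fun i => by
    have := μ.rowLen_anti i (i + 1) i.le_succ
    simp only [beta]; push_cast; omega

theorem cobeta_strictMono : StrictMono μ.cobeta :=
  strictMono_nat_of_lt_succ fun j => by
    have := μ.colLen_anti j (j + 1) j.le_succ
    simp only [cobeta]; push_cast; omega

theorem beta_sub_cobeta (i j : ℕ) :
    μ.beta i - μ.cobeta j = ((μ.rowLen i : ℤ) - j) + ((μ.colLen j : ℤ) - i) - 1 := by
  simp only [beta, cobeta]; ring

theorem cobeta_lt_beta_of_mem {i j : ℕ} (h : (i, j) ∈ μ) : μ.cobeta j < μ.beta i := by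
  have := μ.beta_sub_cobeta i j
  have := mem_iff_lt_rowLen.mp h
  have := mem_iff_lt_colLen.mp h
  omega

theorem beta_lt_cobeta_of_notMem {i j : ℕ} (h : (i, j) ∉ μ) : μ.beta i < μ.cobeta j := by
  have := μ.beta_sub_cobeta i j
  have := mt mem_iff_lt_rowLen.mpr h
  have := mt mem_iff_lt_colLen.mpr h
  omega

theorem cobeta_lt_beta_iff {i j : ℕ} : μ.cobeta j < μ.beta i ↔ (i, j) ∈ μ :=
  ⟨fun h => by_contra fun hn => (μ.beta_lt_cobeta_of_notMem hn).not_gt h,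
    μ.cobeta_lt_beta_of_mem⟩

theorem beta_ne_cobeta (i j : ℕ) : μ.beta i ≠ μ.cobeta j := by
  by_cases h : (i, j) ∈ μ
  · exact (μ.cobeta_lt_beta_of_mem h).ne'
  · exact (μ.beta_lt_cobeta_of_notMem h).ne

theorem hook_eq_beta_sub_cobeta {i j : ℕ} (h : (i, j) ∈ μ) :
    (hook μ (i, j) : ℤ) = μ.beta i - μ.cobeta j := by
  have := mem_iff_lt_rowLen.mp h
  have := mem_iff_lt_colLen.mp h
  rw [beta_sub_cobeta]
  dsimp only [hook]
  omega

theorem rowLen_eq_zero_of_colLen_zero_le {i : ℕ} (h : μ.colLen 0 ≤ i) : μ.rowLen i = 0 := by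
  by_contra hi
  have := mem_iff_lt_colLen.mp (mem_iff_lt_rowLen.mpr (Nat.pos_of_ne_zero hi))
  omega

theorem exists_beta_le (x : ℤ) : ∃ i, μ.beta i ≤ x := by
  refine ⟨μ.colLen 0 + (-x).toNat, ?_⟩
  have := μ.rowLen_eq_zero_of_colLen_zero_le (Nat.le_add_right (μ.colLen 0) (-x).toNat)
  simp only [beta, this]; push_cast; omega

/-- If `β i < x` for the first `i` with `β i ≤ x`, then `x = γ j` for the column `j` of
height `i`. -/
theorem mem_range_cobeta_of_notMem_range_beta {x : ℤ} (hx : x ∉ Set.range μ.beta) :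
    x ∈ Set.range μ.cobeta := by
  have hex := μ.exists_beta_le x
  set i := Nat.find hex
  have hi : μ.beta i < x := (Nat.find_spec hex).lt_of_ne fun h => hx ⟨i, h⟩
  have hrow : (μ.rowLen i : ℤ) ≤ x - μ.colLen 0 + i := by simp only [beta] at hi; omega
  set j := (x - μ.colLen 0 + i).toNat
  have hj : (j : ℤ) = x - μ.colLen 0 + i := Int.toNat_of_nonneg (by omega)
  have hcol : μ.colLen j = i := by
    refine le_antisymm (not_lt.mp fun hlt => ?_) ?_
    · have := mem_iff_lt_rowLen.mp (mem_iff_lt_colLen.mpr hlt)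
      omega
    · rcases Nat.eq_zero_or_pos i with hi0 | hipos
      · exact hi0 ▸ Nat.zero_le _
      · have hk : x < μ.beta (i - 1) := not_le.mp (Nat.find_min hex (by omega))
        have : (i - 1, j) ∈ μ := mem_iff_lt_rowLen.mpr (by simp only [beta] at hk; omega)
        have := mem_iff_lt_colLen.mp this
        omega
  exact ⟨j, by simp only [cobeta, hcol]; omega⟩

theorem compl_maya : (maya μ)ᶜ = Set.range μ.cobeta := by
  rw [maya_eq_range_beta]
  ext x
  refine ⟨μ.mem_range_cobeta_of_notMem_range_beta, ?_⟩
  rintro ⟨j, rfl⟩ ⟨i, hi⟩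
  exact μ.beta_ne_cobeta i j hi

theorem setOf_maya_pairs_eq_image :
    {mn : ℤ × ℤ | mn.1 ∈ maya μ ∧ mn.2 ∉ maya μ ∧ mn.2 < mn.1} =
      Prod.map μ.beta μ.cobeta '' μ.cells := by
  have notMem_maya_iff (n : ℤ) : n ∉ maya μ ↔ n ∈ Set.range μ.cobeta := by
    rw [← Set.mem_compl_iff, compl_maya]
  ext ⟨m, n⟩
  simp only [Set.mem_ofPred_eq, notMem_maya_iff]
  simp only [maya_eq_range_beta, Set.mem_image, Finset.mem_coe, Prod.exists, Prod.map_apply,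
    Prod.mk.injEq]
  constructor
  · rintro ⟨⟨i, rfl⟩, ⟨j, rfl⟩, h⟩
    exact ⟨i, j, μ.cobeta_lt_beta_iff.mp h, rfl, rfl⟩
  · rintro ⟨i, j, h, rfl, rfl⟩
    exact ⟨⟨i, rfl⟩, ⟨j, rfl⟩, μ.cobeta_lt_beta_of_mem h⟩

end YoungDiagram

/-- The product of all hook lengths equals the product of `m - n` over pairs with
`m ∈ M_λ`, `n ∉ M_λ`, `m > n`. -/
theorem prod_hooks_eq_maya_prod (lam : YoungDiagram) :
    (∏ c ∈ lam.cells, (hook lam c : ℤ)) =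
      ∏ᶠ mn ∈ {mn : ℤ × ℤ | mn.1 ∈ maya lam ∧ mn.2 ∉ maya lam ∧ mn.2 < mn.1},
        (mn.1 - mn.2) := by
  have hinj : Function.Injective (Prod.map lam.beta lam.cobeta) :=
    lam.beta_strictAnti.injective.prodMap lam.cobeta_strictMono.injective
  rw [lam.setOf_maya_pairs_eq_image, ← Finset.coe_image, finprod_mem_coe_finset,
    Finset.prod_image hinj.injOn]
  exact Finset.prod_congr rfl fun ⟨i, j⟩ h => lam.hook_eq_beta_sub_cobeta h
end

section
/- A partition is a p-core (i.e., has no removable border strip of size p) if and only if none of its hook lengths is divisible by p. -/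
open scoped BigOperators

/-!
Everything is read off the contents `j - i` of cells. A skew shape without a `2 × 2` square meets
each diagonal at most once, and a connected one meets an interval of diagonals; so a border strip
has one cell per diagonal between its two ends, and that number is the hook length of the cell in
the row of its upper end and the column of its lower end. Conversely, the rim hook of a cell `c`
(the cells weakly below and right of `c` whose diagonal successor lies outside `λ`) is a border
strip with `hook c` cells.

It remains to see that a hook length divisible by `p` forces one equal to `p`. In the Maya diagram
of `λ`, with a bead at `λᵢ - i - 1` for each row `i` and a gap at `j - λ'ⱼ` for each column `j`,
beads and gaps together cover `ℤ` and the hook length of `(i, j)` is the distance from gap `j` up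
to bead `i`. If that distance is `kp`, walk down from bead `i` in steps of `p`: the first step
landing on a gap gives a hook of length exactly `p`.
-/

open Relation

def AdjWithin (S : Finset (ℕ × ℕ)) (x y : ℕ × ℕ) : Prop :=
  x ∈ S ∧ y ∈ S ∧ Adj x y

def IsAdjConnected (S : Finset (ℕ × ℕ)) : Prop :=
  ∀ a ∈ S, ∀ b ∈ S, ReflTransGen (AdjWithin S) a b

def ContainsSquare (S : Finset (ℕ × ℕ)) : Prop :=
  ∃ i j : ℕ, (i, j) ∈ S ∧ (i + 1, j) ∈ S ∧ (i, j + 1) ∈ S ∧ (i + 1, j + 1) ∈ S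

theorem isBorderStrip_iff {p : ℕ} {lam mu : YoungDiagram} :
    IsBorderStrip p lam mu ↔ mu ≤ lam ∧ (lam.cells \ mu.cells).card = p ∧
      IsAdjConnected (lam.cells \ mu.cells) ∧ ¬ ContainsSquare (lam.cells \ mu.cells) :=
  Iff.rfl

theorem Adj.symm {a b : ℕ × ℕ} (h : Adj a b) : Adj b a := by
  unfold Adj at *; omega

instance (S : Finset (ℕ × ℕ)) : Std.Symm (AdjWithin S) :=
  ⟨fun _ _ ⟨hx, hy, h⟩ => ⟨hy, hx, h.symm⟩⟩

theorem Relation.ReflTransGen.exists_eq_of_le_of_le {α : Type*} {r : α → α → Prop} {f : α → ℤ}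
    {x y : α} (h : ReflTransGen r x y) (hf : ∀ a b, r a b → f b ≤ f a + 1) {n : ℤ}
    (hxn : f x ≤ n) (hny : n ≤ f y) : ∃ z, ReflTransGen r x z ∧ f z = n := by
  induction h using ReflTransGen.head_induction_on with
  | refl => exact ⟨y, .refl, by omega⟩
  | head hxx' _ ih =>
    obtain rfl | hlt := hxn.eq_or_lt
    · exact ⟨_, .refl, rfl⟩
    obtain ⟨z, hz, rfl⟩ := ih (by linarith [hf _ _ hxx'])
    exact ⟨z, .head hxx' hz, rfl⟩

namespace YoungDiagram

def content (c : ℕ × ℕ) : ℤ := c.2 - c.1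

theorem content_le_of_adj {a b : ℕ × ℕ} (h : Adj a b) : content b ≤ content a + 1 := by
  unfold Adj at h; unfold content; omega

theorem card_eq_content_sub_content_add_one {S : Finset (ℕ × ℕ)} (hS : IsAdjConnected S)
    (hinj : Set.InjOn content S) {x y : ℕ × ℕ} (hx : x ∈ S) (hy : y ∈ S)
    (hbounds : ∀ z ∈ S, content x ≤ content z ∧ content z ≤ content y) :
    (S.card : ℤ) = content y - content x + 1 := by
  have himage : S.image content = Finset.Icc (content x) (content y) := by
    ext n
    simp only [Finset.mem_image, Finset.mem_Icc]
    refine ⟨fun ⟨z, hz, hzn⟩ => hzn ▸ hbounds z hz, fun ⟨hxn, hny⟩ => ?_⟩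
    obtain ⟨z, hxz, rfl⟩ := (hS x hx y hy).exists_eq_of_le_of_le
      (fun a b hab => content_le_of_adj hab.2.2) hxn hny
    rcases hxz.cases_tail with rfl | ⟨w, -, hwz⟩
    exacts [⟨z, hx, rfl⟩, ⟨z, hwz.2.1, rfl⟩]
  rw [← Finset.card_image_of_injOn hinj, himage, Int.card_Icc_of_le] <;>
    linarith [hbounds y hy]

theorem mem_cells_sdiff_of_le {lam mu : YoungDiagram} {c d : ℕ × ℕ} (hc : c ∉ mu) (hcd : c ≤ d)
    (hd : d ∈ lam) : d ∈ lam.cells \ mu.cells :=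
  Finset.mem_sdiff.2 ⟨hd, fun h => hc (mu.isLowerSet hcd h)⟩

theorem injOn_content {lam mu : YoungDiagram} (h : ¬ ContainsSquare (lam.cells \ mu.cells)) :
    Set.InjOn content (lam.cells \ mu.cells : Finset (ℕ × ℕ)) := by
  rintro ⟨a, b⟩ hx ⟨a', b'⟩ hy hab
  wlog hle : a ≤ a' generalizing a b a' b'
  · exact (this a' b' hy a b hx hab.symm (by omega)).symm
  simp only [content] at hab
  obtain rfl | hlt := hle.eq_or_lt
  · simp only [Prod.mk.injEq, true_and]; omega
  have hmem : ∀ u v, u ≤ 1 → v ≤ 1 → (a + u, b + v) ∈ lam.cells \ mu.cells := fun u v hu hv =>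
    mem_cells_sdiff_of_le (Finset.mem_sdiff.1 hx).2 (Prod.mk_le_mk.2 ⟨by omega, by omega⟩)
      (lam.up_left_mem (by omega) (by omega) (Finset.mem_sdiff.1 hy).1)
  exact absurd ⟨a, b, hmem 0 0 (by omega) (by omega), hmem 1 0 le_rfl (by omega),
    hmem 0 1 (by omega) le_rfl, hmem 1 1 le_rfl le_rfl⟩ h

theorem exists_hook_eq_card {lam mu : YoungDiagram} (hne : (lam.cells \ mu.cells).Nonempty)
    (hconn : IsAdjConnected (lam.cells \ mu.cells))
    (hsq : ¬ ContainsSquare (lam.cells \ mu.cells)) :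
    ∃ c ∈ lam.cells, hook lam c = (lam.cells \ mu.cells).card := by
  obtain ⟨⟨i', j⟩, hx, hmin⟩ := (lam.cells \ mu.cells).exists_min_image content hne
  obtain ⟨⟨i, j'⟩, hy, hmax⟩ := (lam.cells \ mu.cells).exists_max_image content hne
  have hcard := card_eq_content_sub_content_add_one hconn (injOn_content hsq) hx hy
    fun z hz => ⟨hmin z hz, hmax z hz⟩
  obtain ⟨hxl, hxm⟩ := Finset.mem_sdiff.1 hx
  obtain ⟨hyl, hym⟩ := Finset.mem_sdiff.1 hy
  have hrow : (i, j' + 1) ∉ lam := fun h => by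
    have := hmax _ (mem_cells_sdiff_of_le hym (Prod.mk_le_mk.2 ⟨le_rfl, j'.le_succ⟩) h)
    simp only [content] at this; omega
  have hcol : (i' + 1, j) ∉ lam := fun h => by
    have := hmin _ (mem_cells_sdiff_of_le hxm (Prod.mk_le_mk.2 ⟨i'.le_succ, le_rfl⟩) h)
    simp only [content] at this; omega
  have hcontent := hmin _ hy
  simp only [content] at hcontent hcard
  have hcorner : (i, j) ∈ lam := by
    rcases le_or_gt i i' with h | h
    · exact lam.up_left_mem h le_rfl hxl
    · exact lam.up_left_mem le_rfl (by omega) hyl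
  refine ⟨(i, j), hcorner, ?_⟩
  have := mem_iff_lt_rowLen.1 hyl
  have := mem_iff_lt_rowLen.1 hcorner
  have := mem_iff_lt_colLen.1 hxl
  have := mem_iff_lt_colLen.1 hcorner
  rw [mem_iff_lt_rowLen] at hrow
  rw [mem_iff_lt_colLen] at hcol
  simp only [hook]
  omega

def rim (μ : YoungDiagram) (c : ℕ × ℕ) : Finset (ℕ × ℕ) :=
  μ.cells.filter fun d => c ≤ d ∧ (d.1 + 1, d.2 + 1) ∉ μ

theorem mem_rim {μ : YoungDiagram} {c d : ℕ × ℕ} :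
    d ∈ μ.rim c ↔ d ∈ μ ∧ c ≤ d ∧ (d.1 + 1, d.2 + 1) ∉ μ := by
  simp [rim]

def removeRim (μ : YoungDiagram) (c : ℕ × ℕ) : YoungDiagram where
  cells := μ.cells \ μ.rim c
  isLowerSet d e hed hd := by
    simp only [Finset.coe_sdiff, Set.mem_sdiff, Finset.mem_coe, mem_cells, mem_rim, not_and,
      not_not] at hd ⊢
    refine ⟨μ.isLowerSet hed hd.1, fun he hce => ?_⟩
    exact μ.isLowerSet (Prod.mk_le_mk.2 ⟨Nat.succ_le_succ hed.1, Nat.succ_le_succ hed.2⟩)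
      (hd.2 hd.1 (hce.trans hed))

theorem cells_sdiff_removeRim (μ : YoungDiagram) (c : ℕ × ℕ) :
    μ.cells \ (μ.removeRim c).cells = μ.rim c :=
  Finset.sdiff_sdiff_eq_self (Finset.filter_subset _ _)

theorem not_containsSquare_rim (μ : YoungDiagram) (c : ℕ × ℕ) : ¬ ContainsSquare (μ.rim c) :=
  fun ⟨_, _, h, _, _, h'⟩ => (mem_rim.1 h).2.2 (mem_rim.1 h').1

theorem reflTransGen_rim_bottom {μ : YoungDiagram} {i j a b : ℕ} (hd : (a, b) ∈ μ.rim (i, j)) :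
    ReflTransGen (AdjWithin (μ.rim (i, j))) (a, b) (μ.colLen j - 1, j) := by
  obtain ⟨hab, hle, hnext⟩ := mem_rim.1 hd
  obtain ⟨hia, hjb⟩ := Prod.mk_le_mk.1 hle
  have ha : a < μ.colLen j := mem_iff_lt_colLen.1 (μ.up_left_mem le_rfl hjb hab)
  by_cases hdown : (a + 1, b) ∈ μ
  · have hmem : (a + 1, b) ∈ μ.rim (i, j) := mem_rim.2 ⟨hdown, Prod.mk_le_mk.2 ⟨by omega, hjb⟩,
      fun h => hnext (μ.up_left_mem a.succ.le_succ le_rfl h)⟩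
    exact .head ⟨hd, hmem, by unfold Adj; omega⟩ (reflTransGen_rim_bottom hmem)
  obtain rfl | hjb := hjb.eq_or_lt
  · have : μ.colLen j = a + 1 := by rw [mem_iff_lt_colLen] at hdown; omega
    simpa [this] using .refl
  · have hmem : (a, b - 1) ∈ μ.rim (i, j) := mem_rim.2
      ⟨μ.up_left_mem le_rfl (by omega) hab, Prod.mk_le_mk.2 ⟨hia, by omega⟩,
        by rwa [Nat.sub_add_cancel (by omega)]⟩
    exact .head ⟨hd, hmem, by unfold Adj; omega⟩ (reflTransGen_rim_bottom hmem)
termination_by μ.colLen j - a + b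

theorem isAdjConnected_rim (μ : YoungDiagram) (c : ℕ × ℕ) : IsAdjConnected (μ.rim c) :=
  fun ⟨_, _⟩ ha ⟨_, _⟩ hb => (reflTransGen_rim_bottom ha).trans (symm (reflTransGen_rim_bottom hb))

theorem card_rim {μ : YoungDiagram} {c : ℕ × ℕ} (hc : c ∈ μ) : (μ.rim c).card = hook μ c := by
  obtain ⟨i, j⟩ := c
  have hrow := mem_iff_lt_rowLen.1 hc
  have hcol := mem_iff_lt_colLen.1 hc
  have hbottom : (μ.colLen j - 1, j) ∈ μ.rim (i, j) := by
    refine mem_rim.2 ⟨mem_iff_lt_colLen.2 (by omega), Prod.mk_le_mk.2 ⟨by omega, le_rfl⟩,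
      fun h => ?_⟩
    have := mem_iff_lt_colLen.1 (μ.up_left_mem le_rfl j.le_succ h)
    omega
  have htop : (i, μ.rowLen i - 1) ∈ μ.rim (i, j) := by
    refine mem_rim.2 ⟨mem_iff_lt_rowLen.2 (by omega), Prod.mk_le_mk.2 ⟨le_rfl, by omega⟩,
      fun h => ?_⟩
    have := mem_iff_lt_rowLen.1 (μ.up_left_mem i.le_succ le_rfl h)
    omega
  have hbounds : ∀ d ∈ μ.rim (i, j),
      content (μ.colLen j - 1, j) ≤ content d ∧ content d ≤ content (i, μ.rowLen i - 1) := by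
    rintro ⟨a, b⟩ hd
    obtain ⟨hab, hle, -⟩ := mem_rim.1 hd
    obtain ⟨hia, hjb⟩ := Prod.mk_le_mk.1 hle
    have := mem_iff_lt_rowLen.1 hab
    have := mem_iff_lt_colLen.1 hab
    have := μ.rowLen_anti i a hia
    have := μ.colLen_anti j b hjb
    simp only [content]
    omega
  have hinj : Set.InjOn content (μ.rim (i, j) : Set (ℕ × ℕ)) := by
    rw [← cells_sdiff_removeRim]
    exact injOn_content (by rw [cells_sdiff_removeRim]; exact not_containsSquare_rim μ _)
  have := card_eq_content_sub_content_add_one (isAdjConnected_rim μ _) hinj hbottom htop hbounds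
  simp only [content, hook] at this ⊢
  omega

theorem isBorderStrip_removeRim {μ : YoungDiagram} {c : ℕ × ℕ} (hc : c ∈ μ) :
    IsBorderStrip (hook μ c) μ (μ.removeRim c) := by
  rw [isBorderStrip_iff, cells_sdiff_removeRim]
  exact ⟨cells_subset_iff.1 Finset.sdiff_subset, card_rim hc, isAdjConnected_rim μ c,
    not_containsSquare_rim μ c⟩

def bead (μ : YoungDiagram) (i : ℕ) : ℤ := μ.rowLen i - i - 1

def gap (μ : YoungDiagram) (j : ℕ) : ℤ := j - μ.colLen j

theorem gap_lt_bead_iff {μ : YoungDiagram} {i j : ℕ} : μ.gap j < μ.bead i ↔ (i, j) ∈ μ := by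
  have hrow_col : j < μ.rowLen i ↔ i < μ.colLen j :=
    mem_iff_lt_rowLen.symm.trans mem_iff_lt_colLen
  rw [mem_iff_lt_rowLen, bead, gap]
  omega

theorem hook_eq_bead_sub_gap {μ : YoungDiagram} {i j : ℕ} (h : (i, j) ∈ μ) :
    (hook μ (i, j) : ℤ) = μ.bead i - μ.gap j := by
  have := mem_iff_lt_rowLen.1 h
  have := mem_iff_lt_colLen.1 h
  simp only [hook, bead, gap]
  omega

theorem exists_bead_or_gap (μ : YoungDiagram) (n : ℤ) :
    (∃ i, μ.bead i = n) ∨ ∃ j, μ.gap j = n := by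
  classical
  refine or_iff_not_imp_left.2 fun hbead => ?_
  have hex : ∃ i, μ.bead i < n := by
    refine ⟨μ.colLen 0 + n.natAbs, ?_⟩
    have : μ.rowLen (μ.colLen 0 + n.natAbs) = 0 := by
      by_contra h
      have := mem_iff_lt_colLen.1 (mem_iff_lt_rowLen.2 (Nat.pos_of_ne_zero h))
      omega
    simp only [bead, this]
    omega
  set i := Nat.find hex
  have hi : μ.bead i < n := Nat.find_spec hex
  have hni : 0 ≤ n + i := by simp only [bead] at hi; omega
  refine ⟨(n + i).toNat, ?_⟩
  have hcol_le : μ.colLen (n + i).toNat ≤ i := by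
    by_contra h
    have := mem_iff_lt_rowLen.1 (mem_iff_lt_colLen.2 (not_le.1 h))
    simp only [bead] at hi
    omega
  have hle_col : i ≤ μ.colLen (n + i).toNat := by
    rcases Nat.eq_zero_or_pos i with h0 | hpos
    · omega
    have hprev : n < μ.bead (i - 1) :=
      lt_of_le_of_ne (not_lt.1 (Nat.find_min hex (by omega))) fun h => hbead ⟨_, h.symm⟩
    simp only [bead] at hprev
    have := mem_iff_lt_colLen.1 (mem_iff_lt_rowLen.2 (show (n + i).toNat < μ.rowLen (i - 1) by
      omega))
    omega
  simp only [gap]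
  omega

theorem exists_hook_eq_of_bead_sub_gap_eq {μ : YoungDiagram} {p : ℕ} (hp : 0 < p) (k : ℕ)
    {i j : ℕ} (h : μ.bead i - μ.gap j = p * (k + 1)) : ∃ c ∈ μ.cells, hook μ c = p := by
  induction k generalizing i with
  | zero =>
    have hmem := gap_lt_bead_iff.1 (show μ.gap j < μ.bead i by omega)
    exact ⟨_, hmem, by have := hook_eq_bead_sub_gap hmem; omega⟩
  | succ k ih =>
    rcases μ.exists_bead_or_gap (μ.bead i - p) with ⟨i', hi'⟩ | ⟨j', hj'⟩
    · exact ih (by rw [hi']; push_cast at h ⊢; linarith)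
    · have hmem := gap_lt_bead_iff.1 (show μ.gap j' < μ.bead i by omega)
      exact ⟨_, hmem, by have := hook_eq_bead_sub_gap hmem; omega⟩

theorem exists_hook_eq_of_dvd_hook {μ : YoungDiagram} {p : ℕ} (hp : 0 < p) {c : ℕ × ℕ}
    (hc : c ∈ μ) (hdvd : p ∣ hook μ c) : ∃ c' ∈ μ.cells, hook μ c' = p := by
  obtain ⟨i, j⟩ := c
  obtain ⟨_ | k, hk⟩ := hdvd
  · have := gap_lt_bead_iff.2 hc
    have := hook_eq_bead_sub_gap hc
    omega
  exact exists_hook_eq_of_bead_sub_gap_eq hp k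
    (by rw [← hook_eq_bead_sub_gap hc, hk]; push_cast; ring)

end YoungDiagram

/-- A partition is a `p`-core iff none of its hook lengths is divisible by `p`. -/
theorem isPCore_iff_no_hook_divisible (p : ℕ) (hp : 0 < p) (lam : YoungDiagram) :
    IsPCore p lam ↔ ∀ cell ∈ lam.cells, ¬ p ∣ hook lam cell := by
  constructor
  · intro hcore c hc hdvd
    obtain ⟨c', hc', hhook⟩ := YoungDiagram.exists_hook_eq_of_dvd_hook hp hc hdvd
    exact hcore ⟨lam.removeRim c', hhook ▸ YoungDiagram.isBorderStrip_removeRim hc'⟩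
  · rintro h ⟨mu, -, hcard, hconn, hsq⟩
    obtain ⟨c, hc, hhook⟩ :=
      YoungDiagram.exists_hook_eq_card (Finset.card_pos.1 (hcard ▸ hp)) hconn hsq
    exact h c hc (hhook ▸ hcard ▸ dvd_rfl)
end
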